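/- Let X be a trace-zero real 2×2 matrix with Q(X) = -N det(X) = m > 0, and z a point in the upper half-plane. Then Q(X_z) = m · cosh²(d(z, c_X)), where X_z is the projection of X onto the positive definite plane X(z)^⊥, and c_X = {z ∈ ℍ : a|z|² + b·Re(z) + c = 0} is the geodesic associated to the binary quadratic form aNx² + bxy + cy² corresponding to X, and d(z, c_X) is the hyperbolic distance from z to this geodesic. -/

import Mathlib

open Matrix

/-- The matrix `X(z) = (1/(√N·y))·(-x, |z|²; -1, x)` for `z = x + iy`. -/
noncomputable def Xmat (N : ℕ) (z : ℂ) : Matrix (Fin 2) (Fin 2) ℝ :=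
  (1 / (Real.sqrt N * z.im)) • !![-z.re, Complex.normSq z; -1, z.re]

/-- Orthogonal projection of `X` onto the line `ℝ·X(z)`, with respect to the
bilinear form `(A,B) = N·tr(AB)`. -/
noncomputable def projNeg (N : ℕ) (z : ℂ) (X : Matrix (Fin 2) (Fin 2) ℝ) :
    Matrix (Fin 2) (Fin 2) ℝ :=
  (((N : ℝ) * (X * Xmat N z).trace) / ((N : ℝ) * (Xmat N z * Xmat N z).trace)) • Xmat N z

/-- Hyperbolic distance on the upper half-plane, characterized by
`cosh d(z,w) = 1 + |z-w|²/(2 Im z Im w)`. -/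
noncomputable def arcosh (t : ℝ) : ℝ := Real.log (t + Real.sqrt (t ^ 2 - 1))

noncomputable def hypDist (z w : ℂ) : ℝ :=
  arcosh (1 + ‖z - w‖ ^ 2 / (2 * z.im * w.im))

/-!
Write `Q(w) = aN|w|² + b Re w + c` and `D = b² - 4aNc`, so that `m = D / (4N)`. Expanding the
projection gives `Q(X_z) = m + Q(z)² / (4N (Im z)²)`. For `z = x + iy` and `w = u + iv` on `c_X`
there is the polynomial identity
`D y² (cosh² d(z,w) - 1) = Q(z)² + E² / (4v²)`, `E = (b + 2aNu)((x-u)² + y² - v²) - 4aNv²(x-u)`,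
so `cosh² d(z,w) ≥ 1 + Q(z)² / (D y²)`. The equation `E = 0` has a solution on `c_X` (the foot of
the perpendicular from `z`), so the bound is attained, and multiplying by `m` gives the theorem.
-/

section Geodesic

variable {A b c x y u v : ℝ}

theorem discr_mul_sq_cosh_sub_one (hy : y ≠ 0) (hv : v ≠ 0)
    (hw : A * (u ^ 2 + v ^ 2) + b * u + c = 0) :
    (b ^ 2 - 4 * A * c) * y ^ 2 * ((1 + ((x - u) ^ 2 + (y - v) ^ 2) / (2 * y * v)) ^ 2 - 1) =
      (A * (x ^ 2 + y ^ 2) + b * x + c) ^ 2 +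
        ((b + 2 * A * u) * ((x - u) ^ 2 + y ^ 2 - v ^ 2) - 4 * A * v ^ 2 * (x - u)) ^ 2 /
          (4 * v ^ 2) := by
  obtain rfl : c = -(A * (u ^ 2 + v ^ 2) + b * u) := by linear_combination hw
  field_simp
  ring

theorem one_add_sq_div_le_sq_cosh (hy : 0 < y) (hv : 0 < v) (hD : 0 < b ^ 2 - 4 * A * c)
    (hw : A * (u ^ 2 + v ^ 2) + b * u + c = 0) :
    1 + (A * (x ^ 2 + y ^ 2) + b * x + c) ^ 2 / ((b ^ 2 - 4 * A * c) * y ^ 2) ≤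
      (1 + ((x - u) ^ 2 + (y - v) ^ 2) / (2 * y * v)) ^ 2 := by
  have key := discr_mul_sq_cosh_sub_one (x := x) hy.ne' hv.ne' hw
  have hQ : (A * (x ^ 2 + y ^ 2) + b * x + c) ^ 2 ≤
      (b ^ 2 - 4 * A * c) * y ^ 2 * ((1 + ((x - u) ^ 2 + (y - v) ^ 2) / (2 * y * v)) ^ 2 - 1) :=
    key ▸ le_add_of_nonneg_right (by positivity)
  rw [← le_sub_iff_add_le', div_le_iff₀ (by positivity)]
  linarith

theorem exists_foot_on_geodesic (hy : 0 < y) (hD : 0 < b ^ 2 - 4 * A * c) :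
    ∃ u v, 0 < v ∧ A * (u ^ 2 + v ^ 2) + b * u + c = 0 ∧
      (b + 2 * A * u) * ((x - u) ^ 2 + y ^ 2 - v ^ 2) - 4 * A * v ^ 2 * (x - u) = 0 := by
  rcases eq_or_ne A 0 with rfl | hA
  · have hb : b ≠ 0 := by rintro rfl; simp at hD
    have hr : 0 < (x + c / b) ^ 2 + y ^ 2 := by positivity
    refine ⟨-c / b, √((x + c / b) ^ 2 + y ^ 2), Real.sqrt_pos.2 hr, by field_simp; ring, ?_⟩
    rw [Real.sq_sqrt hr.le]
    ring
  · -- `c_X` is the semicircle of centre `x₀` and radius `√R`; substituting `u = x₀ + s` and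
    -- `v² = R - s²` turns `E` into `2A (s K - 2R (x - x₀))`, which is linear in `s`.
    obtain ⟨x₀, hx₀⟩ : ∃ x₀, 2 * A * x₀ = -b := ⟨-b / (2 * A), by field_simp⟩
    obtain ⟨R, hR⟩ : ∃ R, 4 * A ^ 2 * R = b ^ 2 - 4 * A * c :=
      ⟨(b ^ 2 - 4 * A * c) / (4 * A ^ 2), by field_simp⟩
    have hRpos : 0 < R := pos_of_mul_pos_right (hR ▸ hD) (by positivity)
    set K := (x - x₀) ^ 2 + y ^ 2 + R
    have hK : 0 < K := by positivity
    obtain ⟨s, hs⟩ : ∃ s, s * K = 2 * R * (x - x₀) := ⟨2 * R * (x - x₀) / K, by field_simp⟩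
    have hv : 0 < R - s ^ 2 := by
      have h : (R - s ^ 2) * K ^ 2 = R * (((x - x₀) ^ 2 + y ^ 2 - R) ^ 2 + 4 * R * y ^ 2) := by
        linear_combination (-(s * K) - 2 * R * (x - x₀)) * hs
      exact pos_of_mul_pos_left (h ▸ by positivity) (sq_nonneg K)
    refine ⟨x₀ + s, √(R - s ^ 2), Real.sqrt_pos.2 hv, ?_, ?_⟩
    · rw [Real.sq_sqrt hv.le]
      apply mul_left_cancel₀ (show 4 * A ≠ 0 by positivity)
      linear_combination (4 * A * s + 2 * A * x₀ + b) * hx₀ + hR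
    · rw [Real.sq_sqrt hv.le]
      linear_combination ((x - x₀ - s) ^ 2 + y ^ 2 - (R - s ^ 2)) * hx₀ + 2 * A * hs

theorem exists_sq_cosh_eq (hy : 0 < y) (hD : 0 < b ^ 2 - 4 * A * c) :
    ∃ u v, 0 < v ∧ A * (u ^ 2 + v ^ 2) + b * u + c = 0 ∧
      (1 + ((x - u) ^ 2 + (y - v) ^ 2) / (2 * y * v)) ^ 2 =
        1 + (A * (x ^ 2 + y ^ 2) + b * x + c) ^ 2 / ((b ^ 2 - 4 * A * c) * y ^ 2) := by
  obtain ⟨u, v, hv, hw, hE⟩ := exists_foot_on_geodesic (x := x) hy hD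
  refine ⟨u, v, hv, hw, ?_⟩
  have key := discr_mul_sq_cosh_sub_one (x := x) hy.ne' hv.ne' hw
  rw [hE, zero_pow two_ne_zero, zero_div, add_zero] at key
  rw [← key]
  field_simp
  ring

end Geodesic

section HyperbolicDistance

open Complex

noncomputable def coshDist (z w : ℂ) : ℝ :=
  1 + ‖z - w‖ ^ 2 / (2 * z.im * w.im)

theorem hypDist_eq_arcosh_coshDist (z w : ℂ) : hypDist z w = Real.arcosh (coshDist z w) :=
  rfl

theorem coshDist_eq (z w : ℂ) :
    coshDist z w = 1 + ((z.re - w.re) ^ 2 + (z.im - w.im) ^ 2) / (2 * z.im * w.im) := by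
  rw [coshDist, Complex.sq_norm, normSq_apply, sub_re, sub_im]
  ring

theorem one_le_coshDist {z w : ℂ} (hz : 0 < z.im) (hw : 0 < w.im) : 1 ≤ coshDist z w :=
  le_add_of_nonneg_right (by positivity)

variable {A b c : ℝ} {z : ℂ}

theorem cosh_sInf_hypDist_sq (hz : 0 < z.im) (hD : 0 < b ^ 2 - 4 * A * c) :
    Real.cosh (sInf (hypDist z '' {w : ℂ | 0 < w.im ∧ A * normSq w + b * w.re + c = 0})) ^ 2 =
      1 + (A * normSq z + b * z.re + c) ^ 2 / ((b ^ 2 - 4 * A * c) * z.im ^ 2) := by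
  set S := {w : ℂ | 0 < w.im ∧ A * normSq w + b * w.re + c = 0}
  have mem_S {w : ℂ} : w ∈ S ↔ 0 < w.im ∧ A * (w.re ^ 2 + w.im ^ 2) + b * w.re + c = 0 := by
    simp only [S, Set.mem_ofPred_eq, normSq_apply, ← sq]
  obtain ⟨u, v, hv, hw, hmin⟩ := exists_sq_cosh_eq (x := z.re) hz hD
  have hw₀ : (⟨u, v⟩ : ℂ) ∈ S := mem_S.2 ⟨hv, hw⟩
  have hleast : IsLeast (coshDist z '' S) (coshDist z ⟨u, v⟩) := by
    refine ⟨Set.mem_image_of_mem _ hw₀, ?_⟩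
    rintro _ ⟨w, hwS, rfl⟩
    obtain ⟨hwim, hwS⟩ := mem_S.1 hwS
    rw [← sq_le_sq₀ (by linarith [one_le_coshDist (w := ⟨u, v⟩) hz hv])
      (by linarith [one_le_coshDist hz hwim]), coshDist_eq, coshDist_eq]
    exact hmin ▸ one_add_sq_div_le_sq_cosh hz hwim hD hwS
  have hmono : MonotoneOn Real.arcosh (coshDist z '' S) := by
    refine Real.strictMonoOn_arcosh.monotoneOn.mono ?_
    rintro _ ⟨w, hwS, rfl⟩
    exact zero_lt_one.trans_le (one_le_coshDist hz hwS.1)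
  have hleast_hyp := hmono.map_isLeast hleast
  rw [Set.image_image, ← funext (hypDist_eq_arcosh_coshDist z)] at hleast_hyp
  rw [hleast_hyp.csInf_eq, Real.cosh_arcosh (one_le_coshDist (w := ⟨u, v⟩) hz hv),
    coshDist_eq, hmin, normSq_apply]
  ring

end HyperbolicDistance

section FormMatrix

open Complex

variable {N : ℕ} {a b c : ℝ}

noncomputable def formMatrix (N : ℕ) (a b c : ℝ) : Matrix (Fin 2) (Fin 2) ℝ :=
  !![b / (2 * N), c / N; -a, -b / (2 * N)]

theorem neg_mul_det_formMatrix (hN : 0 < N) :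
    -(N : ℝ) * (formMatrix N a b c).det = (b ^ 2 - 4 * (a * N) * c) / (4 * N) := by
  have hNR : (N : ℝ) ≠ 0 := by positivity
  rw [formMatrix, det_fin_two_of]
  field_simp
  ring

theorem neg_mul_det_sub_projNeg (hN : 0 < N) {z : ℂ} (hz : z.im ≠ 0) :
    -(N : ℝ) * (formMatrix N a b c - projNeg N z (formMatrix N a b c)).det =
      -(N : ℝ) * (formMatrix N a b c).det +
        (a * N * normSq z + b * z.re + c) ^ 2 / (4 * N * z.im ^ 2) := by
  have hNR : (0 : ℝ) < N := by exact_mod_cast hN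
  have hsqrt : (N : ℝ) = √N ^ 2 := (Real.sq_sqrt hNR.le).symm
  have hsqrt_pos := Real.sqrt_pos.2 hNR
  simp only [formMatrix, projNeg, Xmat, normSq_apply, trace_fin_two, det_fin_two, mul_apply,
    Fin.sum_univ_two, Matrix.smul_apply, Matrix.sub_apply, of_apply, cons_val', cons_val_zero,
    cons_val_one, cons_val_fin_one, smul_eq_mul, empty_val']
  rw [hsqrt]
  field_simp
  ring

end FormMatrix

/-- For `X = (b/2N, c/N; -a, -b/2N)` with `Q(X) = m > 0` and `z` in the upper
half-plane: `Q(X_z) = m·cosh²(d(z, c_X))`, where `c_X` is the geodesic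
associated to the binary quadratic form `aN x² + bxy + cy²` (the locus
`aN|w|² + b·Re w + c = 0` in the upper half-plane) and `d(z, c_X)` is the
infimum of the hyperbolic distances from `z` to points of `c_X`. -/
theorem stmt_18 (N : ℕ) (hN : 0 < N) (a b c : ℝ) (m : ℝ)
    (X : Matrix (Fin 2) (Fin 2) ℝ)
    (hX : X = !![b / (2 * N), c / N; -a, -b / (2 * N)])
    (hm : m = -(N : ℝ) * X.det) (hmpos : 0 < m)
    (z : ℂ) (hz : 0 < z.im) :
    -(N : ℝ) * (X - projNeg N z X).det =
      m * Real.cosh (sInf (hypDist z ''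
        {w : ℂ | 0 < w.im ∧ a * N * Complex.normSq w + b * w.re + c = 0})) ^ 2 := by
  obtain rfl : X = formMatrix N a b c := hX
  rw [neg_mul_det_formMatrix hN] at hm
  have hD : 0 < b ^ 2 - 4 * (a * N) * c := (div_pos_iff_of_pos_right (by positivity)).1 (hm ▸ hmpos)
  rw [neg_mul_det_sub_projNeg hN hz.ne', cosh_sInf_hypDist_sq hz hD, neg_mul_det_formMatrix hN, hm,
    mul_one_add]
  congr 1
  field_simp
  exact (mul_div_cancel_right₀ _ (by linarith)).symm
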